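/- Under the rank condition: Ω̂_LS − Ω̂_IV = Σ̂_V; the matrix Δ̂ = Ω̂_IV⁻¹ − Ω̂_LS⁻¹ is invertible; Δ̂⁻¹ = Ω̂_IV + Ω̂_IV Σ̂_V⁻¹ Ω̂_IV = Ω̂_LS Σ̂_V⁻¹ Ω̂_LS − Ω̂_LS = (1/T)·YᵀN₁[I_T + Y(YᵀMY)⁻¹Yᵀ]N₁Y = (1/T)·YᵀM₁[Y(YᵀMY)⁻¹Yᵀ − I_T]M₁Y; and Δ̂⁻¹ is positive definite. -/

import Mathlib

open Matrix

variable {T G k₁ k₂ : ℕ}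

/-- Orthogonal projection `P̄[A] = A(AᵀA)⁻¹Aᵀ` onto the column space of `A`. -/
noncomputable def projM {n : Type*} [Fintype n] [DecidableEq n]
    (A : Matrix (Fin T) n ℝ) : Matrix (Fin T) (Fin T) ℝ :=
  A * (Aᵀ * A)⁻¹ * Aᵀ

/-- The annihilator `M̄[A] = I - P̄[A]`. -/
noncomputable def annM {n : Type*} [Fintype n] [DecidableEq n]
    (A : Matrix (Fin T) n ℝ) : Matrix (Fin T) (Fin T) ℝ :=
  1 - projM A

noncomputable def M1 (X₁ : Matrix (Fin T) (Fin k₁) ℝ) : Matrix (Fin T) (Fin T) ℝ :=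
  annM X₁

noncomputable def Pm (X₁ : Matrix (Fin T) (Fin k₁) ℝ) (X₂ : Matrix (Fin T) (Fin k₂) ℝ) :
    Matrix (Fin T) (Fin T) ℝ :=
  projM (fromCols X₁ X₂)

noncomputable def Mm (X₁ : Matrix (Fin T) (Fin k₁) ℝ) (X₂ : Matrix (Fin T) (Fin k₂) ℝ) :
    Matrix (Fin T) (Fin T) ℝ :=
  annM (fromCols X₁ X₂)

noncomputable def N1 (X₁ : Matrix (Fin T) (Fin k₁) ℝ) (X₂ : Matrix (Fin T) (Fin k₂) ℝ) :
    Matrix (Fin T) (Fin T) ℝ :=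
  M1 X₁ * Pm X₁ X₂

noncomputable def B1 (Y : Matrix (Fin T) (Fin G) ℝ) (X₁ : Matrix (Fin T) (Fin k₁) ℝ) :
    Matrix (Fin G) (Fin T) ℝ :=
  (Yᵀ * M1 X₁ * Y)⁻¹ * (Yᵀ * M1 X₁)

noncomputable def B2 (Y : Matrix (Fin T) (Fin G) ℝ) (X₁ : Matrix (Fin T) (Fin k₁) ℝ)
    (X₂ : Matrix (Fin T) (Fin k₂) ℝ) : Matrix (Fin G) (Fin T) ℝ :=
  (Yᵀ * N1 X₁ X₂ * Y)⁻¹ * (Yᵀ * N1 X₁ X₂)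

noncomputable def C1 (Y : Matrix (Fin T) (Fin G) ℝ) (X₁ : Matrix (Fin T) (Fin k₁) ℝ)
    (X₂ : Matrix (Fin T) (Fin k₂) ℝ) : Matrix (Fin G) (Fin T) ℝ :=
  B2 Y X₁ X₂ - B1 Y X₁

/-- OLS estimator `β̂`. -/
noncomputable def betaOLS (y : Fin T → ℝ) (Y : Matrix (Fin T) (Fin G) ℝ)
    (X₁ : Matrix (Fin T) (Fin k₁) ℝ) : Fin G → ℝ :=
  B1 Y X₁ *ᵥ y

/-- 2SLS estimator `β̃`. -/
noncomputable def beta2S (y : Fin T → ℝ) (Y : Matrix (Fin T) (Fin G) ℝ)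
    (X₁ : Matrix (Fin T) (Fin k₁) ℝ) (X₂ : Matrix (Fin T) (Fin k₂) ℝ) : Fin G → ℝ :=
  B2 Y X₁ X₂ *ᵥ y

noncomputable def OmIV (Y : Matrix (Fin T) (Fin G) ℝ) (X₁ : Matrix (Fin T) (Fin k₁) ℝ)
    (X₂ : Matrix (Fin T) (Fin k₂) ℝ) : Matrix (Fin G) (Fin G) ℝ :=
  (T : ℝ)⁻¹ • (Yᵀ * N1 X₁ X₂ * Y)

noncomputable def OmLS (Y : Matrix (Fin T) (Fin G) ℝ) (X₁ : Matrix (Fin T) (Fin k₁) ℝ) :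
    Matrix (Fin G) (Fin G) ℝ :=
  (T : ℝ)⁻¹ • (Yᵀ * M1 X₁ * Y)

noncomputable def SigV (Y : Matrix (Fin T) (Fin G) ℝ) (X₁ : Matrix (Fin T) (Fin k₁) ℝ)
    (X₂ : Matrix (Fin T) (Fin k₂) ℝ) : Matrix (Fin G) (Fin G) ℝ :=
  (T : ℝ)⁻¹ • (Yᵀ * Mm X₁ X₂ * Y)

noncomputable def Dhat (Y : Matrix (Fin T) (Fin G) ℝ) (X₁ : Matrix (Fin T) (Fin k₁) ℝ)
    (X₂ : Matrix (Fin T) (Fin k₂) ℝ) : Matrix (Fin G) (Fin G) ℝ :=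
  (OmIV Y X₁ X₂)⁻¹ - (OmLS Y X₁)⁻¹

noncomputable def Psi0 (Y : Matrix (Fin T) (Fin G) ℝ) (X₁ : Matrix (Fin T) (Fin k₁) ℝ)
    (X₂ : Matrix (Fin T) (Fin k₂) ℝ) : Matrix (Fin T) (Fin T) ℝ :=
  (C1 Y X₁ X₂)ᵀ * (Dhat Y X₁ X₂)⁻¹ * C1 Y X₁ X₂

noncomputable def N2 (Y : Matrix (Fin T) (Fin G) ℝ) (X₁ : Matrix (Fin T) (Fin k₁) ℝ)
    (X₂ : Matrix (Fin T) (Fin k₂) ℝ) : Matrix (Fin T) (Fin T) ℝ :=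
  1 - M1 X₁ * Y * B2 Y X₁ X₂

noncomputable def Lam1 (Y : Matrix (Fin T) (Fin G) ℝ) (X₁ : Matrix (Fin T) (Fin k₁) ℝ)
    (X₂ : Matrix (Fin T) (Fin k₂) ℝ) : Matrix (Fin T) (Fin T) ℝ :=
  (T : ℝ)⁻¹ • (N1 X₁ X₂ * annM (N1 X₁ X₂ * Y) * N1 X₁ X₂)

noncomputable def Lam2 (Y : Matrix (Fin T) (Fin G) ℝ) (X₁ : Matrix (Fin T) (Fin k₁) ℝ)
    (X₂ : Matrix (Fin T) (Fin k₂) ℝ) : Matrix (Fin T) (Fin T) ℝ :=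
  M1 X₁ * ((T : ℝ)⁻¹ • annM (M1 X₁ * Y) - Psi0 Y X₁ X₂) * M1 X₁

noncomputable def Lam3 (Y : Matrix (Fin T) (Fin G) ℝ) (X₁ : Matrix (Fin T) (Fin k₁) ℝ)
    (X₂ : Matrix (Fin T) (Fin k₂) ℝ) : Matrix (Fin T) (Fin T) ℝ :=
  (T : ℝ)⁻¹ • (M1 X₁ * (N2 Y X₁ X₂)ᵀ * N2 Y X₁ X₂ * M1 X₁)

noncomputable def Lam4 (Y : Matrix (Fin T) (Fin G) ℝ) (X₁ : Matrix (Fin T) (Fin k₁) ℝ) :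
    Matrix (Fin T) (Fin T) ℝ :=
  (T : ℝ)⁻¹ • (M1 X₁ * annM (M1 X₁ * Y) * M1 X₁)

def Ybar (Y : Matrix (Fin T) (Fin G) ℝ) (X₁ : Matrix (Fin T) (Fin k₁) ℝ) :
    Matrix (Fin T) (Fin G ⊕ Fin k₁) ℝ :=
  fromCols Y X₁

def Zfull (Y : Matrix (Fin T) (Fin G) ℝ) (X₁ : Matrix (Fin T) (Fin k₁) ℝ)
    (X₂ : Matrix (Fin T) (Fin k₂) ℝ) : Matrix (Fin T) (Fin G ⊕ (Fin k₁ ⊕ Fin k₂)) ℝ :=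
  fromCols Y (fromCols X₁ X₂)

noncomputable def PsiR (Y : Matrix (Fin T) (Fin G) ℝ) (X₁ : Matrix (Fin T) (Fin k₁) ℝ)
    (X₂ : Matrix (Fin T) (Fin k₂) ℝ) : Matrix (Fin T) (Fin T) ℝ :=
  (T : ℝ)⁻¹ • (annM (Ybar Y X₁) - annM (Zfull Y X₁ X₂))

noncomputable def LamR (Y : Matrix (Fin T) (Fin G) ℝ) (X₁ : Matrix (Fin T) (Fin k₁) ℝ)
    (X₂ : Matrix (Fin T) (Fin k₂) ℝ) : Matrix (Fin T) (Fin T) ℝ :=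
  (T : ℝ)⁻¹ • annM (Zfull Y X₁ X₂)

/-- `σ̂² = (1/T)(y−Yβ̂)ᵀM₁(y−Yβ̂)`. -/
noncomputable def sigHat2 (y : Fin T → ℝ) (Y : Matrix (Fin T) (Fin G) ℝ)
    (X₁ : Matrix (Fin T) (Fin k₁) ℝ) : ℝ :=
  (T : ℝ)⁻¹ * ((y - Y *ᵥ betaOLS y Y X₁) ⬝ᵥ (M1 X₁ *ᵥ (y - Y *ᵥ betaOLS y Y X₁)))

/-- `σ̃² = (1/T)(y−Yβ̃)ᵀM₁(y−Yβ̃)`. -/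
noncomputable def sigTil2 (y : Fin T → ℝ) (Y : Matrix (Fin T) (Fin G) ℝ)
    (X₁ : Matrix (Fin T) (Fin k₁) ℝ) (X₂ : Matrix (Fin T) (Fin k₂) ℝ) : ℝ :=
  (T : ℝ)⁻¹ * ((y - Y *ᵥ beta2S y Y X₁ X₂) ⬝ᵥ (M1 X₁ *ᵥ (y - Y *ᵥ beta2S y Y X₁ X₂)))

/-- `σ̃₁² = (1/T)(y−Yβ̃)ᵀN₁(y−Yβ̃)`. -/
noncomputable def sigTil1sq (y : Fin T → ℝ) (Y : Matrix (Fin T) (Fin G) ℝ)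
    (X₁ : Matrix (Fin T) (Fin k₁) ℝ) (X₂ : Matrix (Fin T) (Fin k₂) ℝ) : ℝ :=
  (T : ℝ)⁻¹ * ((y - Y *ᵥ beta2S y Y X₁ X₂) ⬝ᵥ (N1 X₁ X₂ *ᵥ (y - Y *ᵥ beta2S y Y X₁ X₂)))

/-- `σ̃₂² = σ̂² − (β̃−β̂)ᵀΔ̂⁻¹(β̃−β̂)`. -/
noncomputable def sigTil2sq (y : Fin T → ℝ) (Y : Matrix (Fin T) (Fin G) ℝ)
    (X₁ : Matrix (Fin T) (Fin k₁) ℝ) (X₂ : Matrix (Fin T) (Fin k₂) ℝ) : ℝ :=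
  sigHat2 y Y X₁ -
    (beta2S y Y X₁ X₂ - betaOLS y Y X₁) ⬝ᵥ
      ((Dhat Y X₁ X₂)⁻¹ *ᵥ (beta2S y Y X₁ X₂ - betaOLS y Y X₁))

/-- The rank condition: `X₁`, `X = [X₁, X₂]`, `[Y, X]` and `[P̄[X]Y, X₁]` all have
full column rank. -/
def RankCond (Y : Matrix (Fin T) (Fin G) ℝ) (X₁ : Matrix (Fin T) (Fin k₁) ℝ)
    (X₂ : Matrix (Fin T) (Fin k₂) ℝ) : Prop :=
  X₁.rank = k₁ ∧ (fromCols X₁ X₂).rank = k₁ + k₂ ∧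
    (fromCols Y (fromCols X₁ X₂)).rank = G + (k₁ + k₂) ∧
    (fromCols (Pm X₁ X₂ * Y) X₁).rank = G + k₁

/-! Because the column space of `X₁` lies in that of `X`, `N₁ = P̄[X] − P̄[X₁]` is an orthogonal
projection and `M₁ = M + N₁`, so `Ω̂_LS = Ω̂_IV + Σ̂_V`. Both summands are positive definite:
`M̄[A] B = [B, A] (I; −(AᵀA)⁻¹AᵀB)`, so `MY` and `N₁Y = M̄[X₁] (P̄[X] Y)` have full column rank
because `[Y, X]` and `[P̄[X]Y, X₁]` do. The rest is the matrix identity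
`(A⁻¹ − (A + S)⁻¹)⁻¹ = A + A S⁻¹ A = (A + S) S⁻¹ (A + S) − (A + S)` for positive definite `A`, `S`,
whose right-hand side is again positive definite. -/

namespace Matrix

variable {m n p : Type*}

theorem mulVec_injective_of_rank_eq_card [Fintype n] {K : Type*} [Field K] {A : Matrix m n K}
    (h : A.rank = Fintype.card n) : Function.Injective A.mulVec := by
  rw [mulVec_injective_iff, linearIndependent_iff_card_eq_finrank_span, Set.finrank,
    ← rank_eq_finrank_span_cols, h]

section InverseIdentities

variable [Fintype n] [DecidableEq n] {K : Type*} [Field K] {A S : Matrix n n K}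

theorem inv_smul_of_ne_zero {c : K} (hc : c ≠ 0) (hS : IsUnit S.det) :
    (c • S)⁻¹ = c⁻¹ • S⁻¹ :=
  inv_smul' S (Units.mk0 c hc) hS

theorem smul_mul_inv_smul_mul_smul {c : K} (hc : c ≠ 0) (hS : IsUnit S.det) (B : Matrix n n K) :
    c • A * (c • S)⁻¹ * (c • B) = c • (A * S⁻¹ * B) := by
  simp only [inv_smul_of_ne_zero hc hS, Matrix.smul_mul, Matrix.mul_smul, smul_smul,
    inv_mul_cancel₀ hc, mul_one]

theorem add_mul_inv_mul_eq (hS : IsUnit S.det) :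
    A + A * S⁻¹ * A = (A + S) * S⁻¹ * (A + S) - (A + S) := by
  simp only [add_mul, mul_add, mul_nonsing_inv _ hS, nonsing_inv_mul _ hS, Matrix.mul_assoc,
    Matrix.one_mul, Matrix.mul_one]
  abel

theorem inv_sub_inv_add_mul_eq_one (hA : IsUnit A.det) (hS : IsUnit S.det)
    (hAS : IsUnit (A + S).det) : (A⁻¹ - (A + S)⁻¹) * (A + A * S⁻¹ * A) = 1 := by
  have hfactor : A + A * S⁻¹ * A = (A + S) * (S⁻¹ * A) := by
    rw [add_mul, ← Matrix.mul_assoc S, mul_nonsing_inv _ hS, Matrix.one_mul, Matrix.mul_assoc,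
      add_comm]
  rw [sub_mul, hfactor, ← Matrix.mul_assoc (A + S)⁻¹, nonsing_inv_mul _ hAS, Matrix.one_mul,
    ← hfactor, mul_add, nonsing_inv_mul _ hA, ← Matrix.mul_assoc, ← Matrix.mul_assoc,
    nonsing_inv_mul _ hA, Matrix.one_mul, add_sub_cancel_right]

end InverseIdentities

section PosDef

open scoped ComplexOrder

variable [Fintype n] [DecidableEq n] {𝕜 : Type*} [RCLike 𝕜] {A S : Matrix n n 𝕜}

theorem PosDef.isUnit_det (hA : A.PosDef) : IsUnit A.det :=
  isUnit_iff_ne_zero.mpr hA.det_pos.ne'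

theorem PosDef.add_mul_inv_mul (hA : A.PosDef) (hS : S.PosDef) :
    (A + A * S⁻¹ * A).PosDef := by
  have h := hS.inv.posSemidef.conjTranspose_mul_mul_same A
  rw [hA.isHermitian.eq] at h
  exact hA.add_posSemidef h

theorem PosDef.isUnit_inv_sub_inv_add (hA : A.PosDef) (hS : S.PosDef) :
    IsUnit (A⁻¹ - (A + S)⁻¹) :=
  IsUnit.of_mul_eq_one _
    (inv_sub_inv_add_mul_eq_one hA.isUnit_det hS.isUnit_det (hA.add hS).isUnit_det)

theorem PosDef.inv_inv_sub_inv_add (hA : A.PosDef) (hS : S.PosDef) :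
    (A⁻¹ - (A + S)⁻¹)⁻¹ = A + A * S⁻¹ * A :=
  inv_eq_right_inv
    (inv_sub_inv_add_mul_eq_one hA.isUnit_det hS.isUnit_det (hA.add hS).isUnit_det)

end PosDef

section Projection

open Function

variable {T : ℕ} [Fintype n] [DecidableEq n] {A : Matrix (Fin T) n ℝ}

theorem isUnit_det_transpose_mul_self (hA : Injective A.mulVec) : IsUnit (Aᵀ * A).det :=
  (PosDef.conjTranspose_mul_self A hA).isUnit_det

theorem projM_mul_of_eq_mul (hA : Injective A.mulVec) (C : Matrix n p ℝ) :
    projM A * (A * C) = A * C := by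
  rw [projM, Matrix.mul_assoc, Matrix.mul_assoc, ← Matrix.mul_assoc Aᵀ,
    ← Matrix.mul_assoc (Aᵀ * A)⁻¹, nonsing_inv_mul _ (isUnit_det_transpose_mul_self hA),
    Matrix.one_mul]

theorem projM_mul_projM_of_eq_mul [Fintype p] [DecidableEq p] (hA : Injective A.mulVec)
    {B : Matrix (Fin T) p ℝ} {C : Matrix n p ℝ} (hB : B = A * C) : projM A * projM B = projM B := by
  subst hB
  have hfactor : projM (A * C) = A * (C * ((A * C)ᵀ * (A * C))⁻¹ * (A * C)ᵀ) := by
    simp only [projM, Matrix.mul_assoc]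
  rw [hfactor, projM_mul_of_eq_mul hA]

theorem isStarProjection_projM (hA : Injective A.mulVec) : IsStarProjection (projM A) where
  isIdempotentElem := projM_mul_projM_of_eq_mul hA (Matrix.mul_one A).symm
  isSelfAdjoint := by
    rw [IsSelfAdjoint, star_eq_conjTranspose, conjTranspose_eq_transpose_of_trivial, projM,
      transpose_mul, transpose_mul, transpose_transpose, transpose_nonsing_inv, transpose_mul,
      transpose_transpose, Matrix.mul_assoc]

theorem mulVec_injective_annM_mul [Fintype p] [DecidableEq p] {Y : Matrix (Fin T) p ℝ}
    (h : Injective (fromCols Y A).mulVec) : Injective (annM A * Y).mulVec := by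
  set E : Matrix (p ⊕ n) p ℝ := fromRows 1 (-((Aᵀ * A)⁻¹ * Aᵀ * Y)) with hE
  have hfactor : annM A * Y = fromCols Y A * E := by
    rw [fromCols_mul_fromRows, annM, projM, Matrix.sub_mul, Matrix.one_mul, Matrix.mul_one,
      Matrix.mul_neg, sub_eq_add_neg, Matrix.mul_assoc A, Matrix.mul_assoc A]
  have hbottom : Injective E.mulVec := fun v w hvw => by
    simpa [hE, fromRows_mulVec] using congrArg (fun u => u ∘ Sum.inl) hvw
  rw [hfactor]
  exact fun v w hvw => hbottom (h (by simpa only [mulVec_mulVec] using hvw))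

theorem IsStarProjection.posDef_transpose_mul_mul [Fintype p] {Q : Matrix (Fin T) (Fin T) ℝ}
    (hQ : IsStarProjection Q) {Y : Matrix (Fin T) p ℝ} (hY : Injective (Q * Y).mulVec) :
    (Yᵀ * Q * Y).PosDef := by
  have h := PosDef.conjTranspose_mul_self (Q * Y) hY
  rwa [conjTranspose_mul, ← star_eq_conjTranspose Q, hQ.isSelfAdjoint.star_eq, Matrix.mul_assoc,
    ← Matrix.mul_assoc Q, hQ.isIdempotentElem.eq, conjTranspose_eq_transpose_of_trivial,
    ← Matrix.mul_assoc] at h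

end Projection

section Sandwich

variable [Fintype m] [DecidableEq m] [Fintype n] {R : Type*} [Ring R]
  {Q : Matrix m m R} (Z : Matrix n m R) (Y : Matrix m n R) (W : Matrix n n R)

theorem IsIdempotentElem.mul_mul_one_add_mul_mul (hQ : IsIdempotentElem Q) :
    Z * Q * (1 + Y * W * Z) * (Q * Y) = Z * Q * Y + Z * Q * Y * W * (Z * Q * Y) := by
  have hQY : Q * (Q * Y) = Q * Y := by rw [← Matrix.mul_assoc, hQ.eq]
  simp only [Matrix.mul_add, Matrix.add_mul, Matrix.mul_one, Matrix.mul_assoc, hQY]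

theorem IsIdempotentElem.mul_mul_mul_sub_one_mul (hQ : IsIdempotentElem Q) :
    Z * Q * (Y * W * Z - 1) * (Q * Y) = Z * Q * Y * W * (Z * Q * Y) - Z * Q * Y := by
  have hQY : Q * (Q * Y) = Q * Y := by rw [← Matrix.mul_assoc, hQ.eq]
  simp only [Matrix.mul_sub, Matrix.sub_mul, Matrix.mul_one, Matrix.mul_assoc, hQY]

end Sandwich

end Matrix

section Regression

open Function

variable {Y : Matrix (Fin T) (Fin G) ℝ} {X₁ : Matrix (Fin T) (Fin k₁) ℝ}
  {X₂ : Matrix (Fin T) (Fin k₂) ℝ}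

theorem RankCond.mulVec_injective (h : RankCond Y X₁ X₂) :
    Injective X₁.mulVec ∧ Injective (fromCols X₁ X₂).mulVec ∧
      Injective (fromCols Y (fromCols X₁ X₂)).mulVec ∧
      Injective (fromCols (Pm X₁ X₂ * Y) X₁).mulVec := by
  obtain ⟨h₁, h₂, h₃, h₄⟩ := h
  refine ⟨?_, ?_, ?_, ?_⟩ <;> apply mulVec_injective_of_rank_eq_card <;> simpa

theorem Pm_mul_projM_left (hX : Injective (fromCols X₁ X₂).mulVec) :
    Pm X₁ X₂ * projM X₁ = projM X₁ :=
  projM_mul_projM_of_eq_mul hX (C := fromRows 1 0) (by rw [fromCols_mul_fromRows]; simp)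

theorem N1_eq_Pm_sub_projM (hX₁ : Injective X₁.mulVec) (hX : Injective (fromCols X₁ X₂).mulVec) :
    N1 X₁ X₂ = Pm X₁ X₂ - projM X₁ := by
  have hP : IsStarProjection (Pm X₁ X₂) := isStarProjection_projM hX
  have hP₁P : projM X₁ * Pm X₁ X₂ = projM X₁ := by
    simpa only [star_mul, (isStarProjection_projM hX₁).isSelfAdjoint.star_eq,
      hP.isSelfAdjoint.star_eq] using congrArg star (Pm_mul_projM_left hX)
  rw [N1, M1, annM, Matrix.sub_mul, Matrix.one_mul, hP₁P]

theorem isStarProjection_N1 (hX₁ : Injective X₁.mulVec) (hX : Injective (fromCols X₁ X₂).mulVec) :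
    IsStarProjection (N1 X₁ X₂) := by
  rw [N1_eq_Pm_sub_projM hX₁ hX]
  exact (isStarProjection_projM hX₁).sub_of_mul_eq_right (isStarProjection_projM hX)
    (Pm_mul_projM_left hX)

theorem M1_eq_Mm_add_N1 (hX₁ : Injective X₁.mulVec) (hX : Injective (fromCols X₁ X₂).mulVec) :
    M1 X₁ = Mm X₁ X₂ + N1 X₁ X₂ := by
  rw [N1_eq_Pm_sub_projM hX₁ hX, M1, Mm, annM, annM, Pm]
  abel

theorem OmLS_eq_OmIV_add_SigV (hX₁ : Injective X₁.mulVec)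
    (hX : Injective (fromCols X₁ X₂).mulVec) :
    OmLS Y X₁ = OmIV Y X₁ X₂ + SigV Y X₁ X₂ := by
  rw [OmLS, OmIV, SigV, ← smul_add, M1_eq_Mm_add_N1 hX₁ hX, Matrix.mul_add, Matrix.add_mul,
    add_comm]

theorem posDef_transpose_mul_Mm_mul (hX : Injective (fromCols X₁ X₂).mulVec)
    (hYX : Injective (fromCols Y (fromCols X₁ X₂)).mulVec) : (Yᵀ * Mm X₁ X₂ * Y).PosDef :=
  (isStarProjection_projM hX).one_sub.posDef_transpose_mul_mul (mulVec_injective_annM_mul hYX)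

theorem posDef_transpose_mul_N1_mul (hX₁ : Injective X₁.mulVec)
    (hX : Injective (fromCols X₁ X₂).mulVec)
    (hPYX₁ : Injective (fromCols (Pm X₁ X₂ * Y) X₁).mulVec) :
    (Yᵀ * N1 X₁ X₂ * Y).PosDef := by
  refine (isStarProjection_N1 hX₁ hX).posDef_transpose_mul_mul ?_
  rw [N1, M1, Matrix.mul_assoc]
  exact mulVec_injective_annM_mul hPYX₁

end Regression

theorem stmt3_general {T G k₁ k₂ : ℕ}
    (hT : 0 < T)
    (Y : Matrix (Fin T) (Fin G) ℝ)
    (X₁ : Matrix (Fin T) (Fin k₁) ℝ) (X₂ : Matrix (Fin T) (Fin k₂) ℝ)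
    (hrank : RankCond Y X₁ X₂) :
    OmLS Y X₁ - OmIV Y X₁ X₂ = SigV Y X₁ X₂ ∧
    IsUnit (Dhat Y X₁ X₂) ∧
    (Dhat Y X₁ X₂)⁻¹
      = OmIV Y X₁ X₂ + OmIV Y X₁ X₂ * (SigV Y X₁ X₂)⁻¹ * OmIV Y X₁ X₂ ∧
    (Dhat Y X₁ X₂)⁻¹
      = OmLS Y X₁ * (SigV Y X₁ X₂)⁻¹ * OmLS Y X₁ - OmLS Y X₁ ∧
    (Dhat Y X₁ X₂)⁻¹
      = (T : ℝ)⁻¹ •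
          (Yᵀ * N1 X₁ X₂ * (1 + Y * (Yᵀ * Mm X₁ X₂ * Y)⁻¹ * Yᵀ) * (N1 X₁ X₂ * Y)) ∧
    (Dhat Y X₁ X₂)⁻¹
      = (T : ℝ)⁻¹ •
          (Yᵀ * M1 X₁ * (Y * (Yᵀ * Mm X₁ X₂ * Y)⁻¹ * Yᵀ - 1) * (M1 X₁ * Y)) ∧
    ((Dhat Y X₁ X₂)⁻¹).PosDef := by
  obtain ⟨hX₁, hX, hYX, hPYX₁⟩ := hrank.mulVec_injective
  have hS := posDef_transpose_mul_Mm_mul hX hYX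
  have hA := posDef_transpose_mul_N1_mul hX₁ hX hPYX₁
  have hT' : (0 : ℝ) < (T : ℝ)⁻¹ := by positivity
  have hIV : (OmIV Y X₁ X₂).PosDef := hA.smul hT'
  have hV : (SigV Y X₁ X₂).PosDef := hS.smul hT'
  have hLS := OmLS_eq_OmIV_add_SigV (Y := Y) hX₁ hX
  have hDinv :
      (Dhat Y X₁ X₂)⁻¹ = OmIV Y X₁ X₂ + OmIV Y X₁ X₂ * (SigV Y X₁ X₂)⁻¹ * OmIV Y X₁ X₂ := by
    rw [Dhat, hLS]
    exact hIV.inv_inv_sub_inv_add hV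
  have hDinv' : (Dhat Y X₁ X₂)⁻¹ = OmLS Y X₁ * (SigV Y X₁ X₂)⁻¹ * OmLS Y X₁ - OmLS Y X₁ := by
    rw [hDinv, hLS, add_mul_inv_mul_eq hV.isUnit_det]
  refine ⟨by rw [hLS, add_sub_cancel_left], by rw [Dhat, hLS]; exact hIV.isUnit_inv_sub_inv_add hV,
    hDinv, hDinv', ?_, ?_, hDinv ▸ hIV.add_mul_inv_mul hV⟩
  · rw [hDinv, (isStarProjection_N1 hX₁ hX).isIdempotentElem.mul_mul_one_add_mul_mul, smul_add,
      OmIV, SigV, smul_mul_inv_smul_mul_smul hT'.ne' hS.isUnit_det]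
  · have hM1 : IsIdempotentElem (M1 X₁) := (isStarProjection_projM hX₁).one_sub.isIdempotentElem
    rw [hDinv', hM1.mul_mul_mul_sub_one_mul, smul_sub, OmLS, SigV,
      smul_mul_inv_smul_mul_smul hT'.ne' hS.isUnit_det]

/-- Under the rank condition, `Ω̂_LS − Ω̂_IV = Σ̂_V`; the matrix `Δ̂ = Ω̂_IV⁻¹ − Ω̂_LS⁻¹`
is invertible; `Δ̂⁻¹ = Ω̂_IV + Ω̂_IV Σ̂_V⁻¹ Ω̂_IV = Ω̂_LS Σ̂_V⁻¹ Ω̂_LS − Ω̂_LS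
= (1/T)·YᵀN₁[I_T + Y(YᵀMY)⁻¹Yᵀ]N₁Y = (1/T)·YᵀM₁[Y(YᵀMY)⁻¹Yᵀ − I_T]M₁Y`;
and `Δ̂⁻¹` is positive definite. -/
theorem stmt3 {T G k₁ k₂ : ℕ}
    (hT : 0 < T) (hG : 0 < G) (hk₁ : 0 < k₁) (hk₂ : 0 < k₂)
    (Y : Matrix (Fin T) (Fin G) ℝ)
    (X₁ : Matrix (Fin T) (Fin k₁) ℝ) (X₂ : Matrix (Fin T) (Fin k₂) ℝ)
    (hrank : RankCond Y X₁ X₂) :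
    OmLS Y X₁ - OmIV Y X₁ X₂ = SigV Y X₁ X₂ ∧
    IsUnit (Dhat Y X₁ X₂) ∧
    (Dhat Y X₁ X₂)⁻¹
      = OmIV Y X₁ X₂ + OmIV Y X₁ X₂ * (SigV Y X₁ X₂)⁻¹ * OmIV Y X₁ X₂ ∧
    (Dhat Y X₁ X₂)⁻¹
      = OmLS Y X₁ * (SigV Y X₁ X₂)⁻¹ * OmLS Y X₁ - OmLS Y X₁ ∧
    (Dhat Y X₁ X₂)⁻¹
      = (T : ℝ)⁻¹ •
          (Yᵀ * N1 X₁ X₂ * (1 + Y * (Yᵀ * Mm X₁ X₂ * Y)⁻¹ * Yᵀ) * (N1 X₁ X₂ * Y)) ∧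
    (Dhat Y X₁ X₂)⁻¹
      = (T : ℝ)⁻¹ •
          (Yᵀ * M1 X₁ * (Y * (Yᵀ * Mm X₁ X₂ * Y)⁻¹ * Yᵀ - 1) * (M1 X₁ * Y)) ∧
    ((Dhat Y X₁ X₂)⁻¹).PosDef :=
  stmt3_general hT Y X₁ X₂ hrank
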